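/- arXiv:2006.09150 — 4 statements merged into one kernel-verified Lean document; each statement's English description precedes it below -/
import Mathlib

section
/- Let λ, μ ∈ ℝ with μ > 0 and λ + 2μ > 0. For an (n-1)×(n-1) symmetric matrix E, define E_ξ for ξ ∈ ℝⁿ as the n×n symmetric matrix whose upper-left (n-1)×(n-1) block is E, whose last column (and row) above the diagonal entry is (ξ₁,…,ξ_{n-1}), and whose (n,n) entry is ξ_n. Then min over ξ ∈ ℝⁿ of ℂE_ξ·E_ξ, where ℂF := λ tr(F) I + 2μ F, equals (2λμ/(λ+2μ))(tr E)² + 2μ|E|². -/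
open Matrix BigOperators

/-- Frobenius inner product `A · B = tr(Aᵀ B) = Σ_{i,j} A_{ij} B_{ij}` of square matrices. -/
def mdot {m : Type*} [Fintype m] (A B : Matrix m m ℝ) : ℝ := ∑ i, ∑ j, A i j * B i j

/-- The isotropic elasticity tensor `ℂF = λ tr(F) I + 2μ F`. -/
noncomputable def elastC (lam mu : ℝ) {m : Type*} [Fintype m] [DecidableEq m]
    (F : Matrix m m ℝ) : Matrix m m ℝ :=
  lam • F.trace • (1 : Matrix m m ℝ) + (2 * mu) • F

/-- Extension `E_ξ` of an `n×n` symmetric matrix `E` to an `(n+1)×(n+1)` symmetric matrix: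
upper-left block `E`, last column/row `ξ₁,…,ξ_n` off the diagonal, and `(n+1,n+1)`-entry
`ξ_{n+1}` (i.e. the free entries `ξ ∈ ℝ^{n+1}` fill the last row and column). -/
def extMat (n : ℕ) (E : Matrix (Fin n) (Fin n) ℝ) (ξ : Fin (n + 1) → ℝ) :
    Matrix (Fin (n + 1)) (Fin (n + 1)) ℝ :=
  Matrix.of fun i j =>
    if hi : (i : ℕ) < n then
      (if hj : (j : ℕ) < n then E ⟨i, hi⟩ ⟨j, hj⟩ else ξ i)
    else (if hj : (j : ℕ) < n then ξ j else ξ (Fin.last n))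

lemma mdot_elastC {m : Type*} [Fintype m] [DecidableEq m] (lam mu : ℝ)
    (F : Matrix m m ℝ) :
    mdot (elastC lam mu F) F = lam * F.trace ^ 2 + 2 * mu * ∑ i, ∑ j, (F i j) ^ 2 := by
  simp only [mdot, elastC, Matrix.add_apply, Matrix.smul_apply, Matrix.one_apply,
    smul_eq_mul, mul_ite, mul_one, mul_zero, add_mul, ite_mul, zero_mul,
    Finset.sum_add_distrib]
  rw [Matrix.trace]
  simp only [Finset.sum_ite_eq, Finset.mem_univ, if_true, Matrix.diag]
  have h2 : ∑ x : m, ∑ y : m, 2 * mu * F x y * F x y = 2 * mu * ∑ x : m, ∑ y : m, F x y ^ 2 := by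
    rw [Finset.mul_sum]
    exact Finset.sum_congr rfl fun _ _ => by
      rw [Finset.mul_sum]; exact Finset.sum_congr rfl fun _ _ => by ring
  rw [h2, ← Finset.mul_sum, sq]
  ring

section extLemmas
variable {n : ℕ} (E : Matrix (Fin n) (Fin n) ℝ) (ξ : Fin (n + 1) → ℝ)

lemma ext_cc (i j : Fin n) : extMat n E ξ i.castSucc j.castSucc = E i j := by
  simp [extMat, i.isLt, j.isLt]

lemma ext_cl (i : Fin n) : extMat n E ξ i.castSucc (Fin.last n) = ξ i.castSucc := by
  simp [extMat, i.isLt]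

lemma ext_lc (j : Fin n) : extMat n E ξ (Fin.last n) j.castSucc = ξ j.castSucc := by
  simp [extMat, j.isLt]

lemma ext_ll : extMat n E ξ (Fin.last n) (Fin.last n) = ξ (Fin.last n) := by
  simp [extMat]

lemma ext_trace : (extMat n E ξ).trace = E.trace + ξ (Fin.last n) := by
  rw [Matrix.trace, Fin.sum_univ_castSucc]
  simp only [Matrix.diag, ext_cc, ext_ll]
  rfl

lemma ext_sq : ∑ i, ∑ j, (extMat n E ξ i j) ^ 2
    = (∑ i, ∑ j, (E i j) ^ 2) + 2 * ∑ i : Fin n, (ξ i.castSucc) ^ 2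
      + (ξ (Fin.last n)) ^ 2 := by
  rw [Fin.sum_univ_castSucc]
  have h1 : ∀ i : Fin n, ∑ j, (extMat n E ξ i.castSucc j) ^ 2
      = (∑ j, (E i j) ^ 2) + (ξ i.castSucc) ^ 2 := by
    intro i
    rw [Fin.sum_univ_castSucc]
    simp [ext_cc, ext_cl]
  have h2 : ∑ j, (extMat n E ξ (Fin.last n) j) ^ 2
      = (∑ j : Fin n, (ξ j.castSucc) ^ 2) + (ξ (Fin.last n)) ^ 2 := by
    rw [Fin.sum_univ_castSucc]
    simp [ext_lc, ext_ll]
  rw [h2, Finset.sum_congr rfl fun i _ => h1 i, Finset.sum_add_distrib]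
  ring

lemma ext_val (lam mu : ℝ) :
    mdot (elastC lam mu (extMat n E ξ)) (extMat n E ξ)
      = lam * (E.trace + ξ (Fin.last n)) ^ 2
        + 2 * mu * ((∑ i, ∑ j, (E i j) ^ 2) + 2 * ∑ i : Fin n, (ξ i.castSucc) ^ 2
            + (ξ (Fin.last n)) ^ 2) := by
  rw [mdot_elastC, ext_trace, ext_sq]

end extLemmas

/-- With `μ > 0` and `λ + 2μ > 0`, the minimum over `ξ ∈ ℝ^{n+1}` of `ℂ E_ξ · E_ξ`
equals `(2λμ/(λ+2μ)) (tr E)² + 2μ |E|²`, for every symmetric `E` of size `n`.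
(The ambient dimension is `n+1`, the plate dimension `n`.) -/
theorem stmt0 (n : ℕ) (lam mu : ℝ) (hmu : 0 < mu) (hl : 0 < lam + 2 * mu)
    (E : Matrix (Fin n) (Fin n) ℝ) (hE : Eᵀ = E) :
    IsLeast {v : ℝ | ∃ ξ : Fin (n + 1) → ℝ,
        v = mdot (elastC lam mu (extMat n E ξ)) (extMat n E ξ)}
      (2 * lam * mu / (lam + 2 * mu) * E.trace ^ 2 + 2 * mu * ∑ i, ∑ j, (E i j) ^ 2) := by
  have hl0 : lam + 2 * mu ≠ 0 := ne_of_gt hl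
  set t := E.trace with ht
  set S := ∑ i, ∑ j, (E i j) ^ 2 with hS
  constructor
  · -- membership: optimal ξ
    refine ⟨fun i => if (i : ℕ) < n then 0 else -lam * t / (lam + 2 * mu), ?_⟩
    rw [ext_val]
    have hlast : (Fin.last n : Fin (n + 1)).1 = n := rfl
    simp only [hlast, lt_irrefl, if_false]
    have hz : ∑ i : Fin n,
        ((if ((i.castSucc : Fin (n + 1)) : ℕ) < n then (0 : ℝ)
          else -lam * t / (lam + 2 * mu))) ^ 2 = 0 := by
      apply Finset.sum_eq_zero
      intro i _
      simp [i.isLt]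
    rw [hz]
    field_simp
    ring
  · -- lower bound
    rintro v ⟨ξ, rfl⟩
    rw [ext_val]
    set x := ξ (Fin.last n)
    have hP : 0 ≤ ∑ i : Fin n, (ξ i.castSucc) ^ 2 :=
      Finset.sum_nonneg fun _ _ => sq_nonneg _
    have hkey : 2 * lam * mu / (lam + 2 * mu) * t ^ 2
        ≤ lam * (t + x) ^ 2 + 2 * mu * x ^ 2 := by
      rw [div_mul_eq_mul_div, div_le_iff₀ hl]
      nlinarith [sq_nonneg ((lam + 2 * mu) * x + lam * t)]
    nlinarith [mul_nonneg hmu.le hP]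
end

section
/- Let λ, μ ∈ ℝ with μ > 0 and 2μ + nλ > 0. Then the quadratic form E ↦ (2λμ/(λ+2μ))(tr E)² + 2μ|E|² is positive definite on the space of (n-1)×(n-1) real symmetric matrices. -/
open Matrix BigOperators

/-! The coefficient `c = 2λμ/(λ+2μ)` may be negative, but Cauchy–Schwarz on the diagonal gives
`(tr E)² ≤ n |E|²`, so the form is at least `min(2μ, cn + 2μ) |E|²`, and
`cn + 2μ = 2μ (2μ + (n+1)λ) / (λ+2μ)` is positive under the hypotheses. -/

namespace Matrix

variable {ι R : Type*} [Fintype ι]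

theorem trace_sq_le_card_mul_sum_sq [CommRing R] [LinearOrder R] [IsStrictOrderedRing R]
    (E : Matrix ι ι R) : E.trace ^ 2 ≤ Fintype.card ι * ∑ i, ∑ j, E i j ^ 2 := by
  have diag_le : ∑ i, E i i ^ 2 ≤ ∑ i, ∑ j, E i j ^ 2 :=
    Finset.sum_le_sum fun i _ =>
      Finset.single_le_sum (f := fun j => E i j ^ 2) (fun _ _ => sq_nonneg _) (Finset.mem_univ i)
  calc E.trace ^ 2 ≤ Fintype.card ι * ∑ i, E i i ^ 2 := sq_sum_le_card_mul_sum_sq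
    _ ≤ Fintype.card ι * ∑ i, ∑ j, E i j ^ 2 := by gcongr

theorem sum_sum_sq_pos [Ring R] [LinearOrder R] [IsStrictOrderedRing R]
    {E : Matrix ι ι R} (hE : E ≠ 0) : 0 < ∑ i, ∑ j, E i j ^ 2 := by
  obtain ⟨i, j, hij⟩ : ∃ i j, E i j ≠ 0 := by
    by_contra! h
    exact hE (Matrix.ext h)
  exact Finset.sum_pos' (fun _ _ => Finset.sum_nonneg fun _ _ => sq_nonneg _)
    ⟨i, Finset.mem_univ i, Finset.sum_pos' (fun _ _ => sq_nonneg _)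
      ⟨j, Finset.mem_univ j, sq_pos_of_ne_zero hij⟩⟩

end Matrix

theorem pos_of_sq_le_of_mul_add_pos {a b k s t : ℝ} (hs : 0 < s) (ht : t ^ 2 ≤ k * s)
    (hb : 0 < b) (hk : 0 < a * k + b) : 0 < a * t ^ 2 + b * s := by
  rcases le_or_gt 0 a with ha | ha
  · nlinarith [sq_nonneg t]
  · nlinarith [mul_le_mul_of_nonpos_left ht ha.le]

theorem add_two_mul_pos_of_two_mul_add_mul_pos {lam mu c : ℝ} (hmu : 0 < mu) (hc : 1 ≤ c)
    (h : 0 < 2 * mu + c * lam) : 0 < lam + 2 * mu := by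
  rcases le_or_gt 0 lam with hl | hl
  · linarith
  · nlinarith

theorem lame_coeff_mul_add_eq {lam mu x : ℝ} (hl : lam + 2 * mu ≠ 0) :
    2 * lam * mu / (lam + 2 * mu) * x + 2 * mu =
      2 * mu * (2 * mu + (x + 1) * lam) / (lam + 2 * mu) := by
  field_simp
  ring

/-- With `μ > 0` and `2μ + nλ > 0` (ambient dimension `n+1` here, so the condition reads
`2μ + (n+1)λ > 0`), the reduced quadratic form
`E ↦ (2λμ/(λ+2μ))(tr E)² + 2μ|E|²` is positive definite on symmetric `n×n` matrices. -/
theorem stmt1 (n : ℕ) (lam mu : ℝ) (hmu : 0 < mu) (h : 0 < 2 * mu + (n + 1 : ℝ) * lam) :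
    ∀ E : Matrix (Fin n) (Fin n) ℝ, Eᵀ = E → E ≠ 0 →
      0 < 2 * lam * mu / (lam + 2 * mu) * E.trace ^ 2
          + 2 * mu * ∑ i, ∑ j, (E i j) ^ 2 := by
  intro E _ hE
  have hl2m : 0 < lam + 2 * mu :=
    add_two_mul_pos_of_two_mul_add_mul_pos hmu (by simp) h
  have htr := E.trace_sq_le_card_mul_sum_sq
  rw [Fintype.card_fin] at htr
  refine pos_of_sq_le_of_mul_add_pos (Matrix.sum_sum_sq_pos hE) htr (by positivity) ?_
  rw [lame_coeff_mul_add_eq hl2m.ne']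
  positivity
end

section
/- Let u_ρ ∈ GSBD²(Ω₁) with u_ρ → u in measure and sup_ρ E_ρ(u_ρ) < +∞. Assume the lower semicontinuity property: for any fixed norm ψ on ℝⁿ, ∫_{J_u} ψ(ν_u) dH^{n-1} ≤ liminf_ρ ∫_{J_{u_ρ}} ψ(ν_{u_ρ}) dH^{n-1}. Then (ν_u)_n = 0 H^{n-1}-a.e. on J_u. -/
open MeasureTheory Set Filter Topology
open scoped ENNReal

/-- The anisotropic surface density `φ_ρ(ν)` (Euclidean norm of `(ν', ν_n/ρ)`),
ambient space `ℝ^{n+1}`. -/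
noncomputable def phiRho (n : ℕ) (ρ : ℝ) (ν : Fin (n + 1) → ℝ) : ℝ :=
  Real.sqrt ((∑ i : Fin n, (ν i.castSucc) ^ 2) + (ν (Fin.last n) / ρ) ^ 2)

/-!
For every `ρ > 0`, `φ_ρ` is a norm, and the lower-semicontinuity hypothesis applied to it bounds
`∫_{J_u} φ_ρ(ν_u)` by the uniform energy bound `C₀`, because `φ_ρ` decreases in `ρ` and hence
`φ_ρ ≤ φ_σ` along the sequence `σ → 0⁺`. Since `|ν_n| ≤ ρ φ_ρ(ν)`, this gives
`∫_{J_u} |(ν_u)_n| ≤ ρ C₀` for every `ρ > 0`, so the integral vanishes.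
-/

noncomputable def lastCoordDivLinear (n : ℕ) (ρ : ℝ) :
    (Fin (n + 1) → ℝ) →ₗ[ℝ] EuclideanSpace ℝ (Fin (n + 1)) where
  toFun v := WithLp.toLp 2 fun i => if i = Fin.last n then v i / ρ else v i
  map_add' v w := by
    ext i
    simp only [Pi.add_apply, PiLp.add_apply]
    split_ifs <;> ring
  map_smul' a v := by
    ext i
    simp only [Pi.smul_apply, PiLp.smul_apply, smul_eq_mul, RingHom.id_apply]
    split_ifs <;> ring

lemma lastCoordDivLinear_apply (n : ℕ) (ρ : ℝ) (v : Fin (n + 1) → ℝ) (i : Fin (n + 1)) :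
    lastCoordDivLinear n ρ v i = if i = Fin.last n then v i / ρ else v i :=
  rfl

lemma lastCoordDivLinear_injective (n : ℕ) {ρ : ℝ} (hρ : ρ ≠ 0) :
    Function.Injective (lastCoordDivLinear n ρ) := by
  refine (injective_iff_map_eq_zero _).2 fun v hv => funext fun i => ?_
  have hvi := congrArg (· i) hv
  simp only [lastCoordDivLinear_apply, PiLp.zero_apply] at hvi
  split_ifs at hvi
  · exact (div_eq_zero_iff.1 hvi).resolve_right hρ
  · exact hvi

lemma norm_lastCoordDivLinear (n : ℕ) (ρ : ℝ) (v : Fin (n + 1) → ℝ) :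
    ‖lastCoordDivLinear n ρ v‖ = phiRho n ρ v := by
  simp only [EuclideanSpace.norm_eq, phiRho, Fin.sum_univ_castSucc, lastCoordDivLinear_apply,
    Real.norm_eq_abs, sq_abs, if_pos, (Fin.castSucc_lt_last _).ne, if_false]

section phiRho

variable (n : ℕ) (ρ : ℝ)

lemma phiRho_nonneg (v : Fin (n + 1) → ℝ) : 0 ≤ phiRho n ρ v :=
  Real.sqrt_nonneg _

lemma phiRho_eq_zero_iff {ρ : ℝ} (hρ : ρ ≠ 0) (v : Fin (n + 1) → ℝ) :
    phiRho n ρ v = 0 ↔ v = 0 := by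
  rw [← norm_lastCoordDivLinear, norm_eq_zero,
    (lastCoordDivLinear_injective n hρ).eq_iff' (map_zero _)]

lemma phiRho_smul (a : ℝ) (v : Fin (n + 1) → ℝ) :
    phiRho n ρ (a • v) = |a| * phiRho n ρ v := by
  rw [← norm_lastCoordDivLinear, ← norm_lastCoordDivLinear, map_smul, norm_smul,
    Real.norm_eq_abs]

lemma phiRho_add_le (v w : Fin (n + 1) → ℝ) :
    phiRho n ρ (v + w) ≤ phiRho n ρ v + phiRho n ρ w := by
  simp only [← norm_lastCoordDivLinear, map_add, norm_add_le]

variable {n ρ}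

lemma phiRho_anti {σ : ℝ} (hρ : 0 < ρ) (hρσ : ρ ≤ σ) (v : Fin (n + 1) → ℝ) :
    phiRho n σ v ≤ phiRho n ρ v := by
  unfold phiRho
  rw [div_pow, div_pow]
  gcongr

lemma abs_last_le_mul_phiRho (hρ : 0 < ρ) (v : Fin (n + 1) → ℝ) :
    |v (Fin.last n)| ≤ ρ * phiRho n ρ v := by
  rw [← div_le_iff₀' hρ, ← abs_of_pos hρ, ← abs_div, ← Real.sqrt_sq_eq_abs, abs_of_pos hρ]
  exact Real.sqrt_le_sqrt (le_add_of_nonneg_left (Finset.sum_nonneg fun i _ => sq_nonneg _))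

lemma lintegral_abs_last_le {α : Type*} [MeasurableSpace α] (μ : Measure α) (hρ : 0 < ρ)
    (ν : α → Fin (n + 1) → ℝ) :
    ∫⁻ x, ENNReal.ofReal |ν x (Fin.last n)| ∂μ
      ≤ ENNReal.ofReal ρ * ∫⁻ x, ENNReal.ofReal (phiRho n ρ (ν x)) ∂μ := by
  rw [← lintegral_const_mul' _ _ ENNReal.ofReal_ne_top]
  refine lintegral_mono fun x => ?_
  rw [← ENNReal.ofReal_mul hρ.le]
  exact ENNReal.ofReal_le_ofReal (abs_last_le_mul_phiRho hρ _)

end phiRho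

lemma liminf_nhdsGT_le_of_forall_Ioo_le {f : ℝ → ℝ≥0∞} {C : ℝ≥0∞} {r : ℝ} (hr : 0 < r)
    (hf : ∀ ρ ∈ Ioo 0 r, f ρ ≤ C) : liminf f (𝓝[>] 0) ≤ C :=
  liminf_le_of_frequently_le' <| Eventually.frequently <|
    eventually_of_mem (Ioo_mem_nhdsGT hr) hf

lemma ENNReal.eq_zero_of_forall_le_ofReal_mul {a C : ℝ≥0∞} (hC : C ≠ ⊤)
    (h : ∀ ε : ℝ, 0 < ε → a ≤ ENNReal.ofReal ε * C) : a = 0 := by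
  have hlim : Tendsto (fun ε : ℝ => ENNReal.ofReal ε * C) (𝓝[>] 0) (𝓝 0) := by
    simpa using ENNReal.Tendsto.mul_const
      ((ENNReal.continuous_ofReal.tendsto 0).mono_left nhdsWithin_le_nhds) (Or.inr hC)
  exact nonpos_iff_eq_zero.1 (ge_of_tendsto hlim (eventually_nhdsWithin_of_forall h))

/-- Horizontality of the limiting jump normal.  Suppose `u_ρ ∈ GSBD²(Ω₁)` have jump sets
`J ρ` with approximate unit normals `νj ρ`, the surface parts of the energies
`E_ρ(u_ρ) ≥ ∫_{J_{u_ρ}} φ_ρ(ν_{u_ρ}) dH^n` are uniformly bounded, and the limit `u` has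
jump set `Ju` with approximate normal `νu`.  If for every norm `ψ` on `ℝ^{n+1}` the
lower-semicontinuity estimate
`∫_{J_u} ψ(ν_u) dH^n ≤ liminf_{ρ→0⁺} ∫_{J_{u_ρ}} ψ(ν_{u_ρ}) dH^n` holds, then
`(ν_u)_n = 0` for `H^n`-a.e. point of `J_u`. -/
theorem stmt7 (n : ℕ)
    (J : ℝ → Set (Fin (n + 1) → ℝ)) (νj : ℝ → (Fin (n + 1) → ℝ) → Fin (n + 1) → ℝ)
    (Ju : Set (Fin (n + 1) → ℝ)) (νu : (Fin (n + 1) → ℝ) → Fin (n + 1) → ℝ)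
    (hmeas : Measurable fun x => νu x (Fin.last n))
    (hbound : ∃ C₀ : ℝ≥0∞, C₀ ≠ ⊤ ∧ ∀ ρ : ℝ, 0 < ρ →
      ∫⁻ x in J ρ, ENNReal.ofReal (phiRho n ρ (νj ρ x)) ∂μH[(n : ℝ)] ≤ C₀)
    (hlsc : ∀ ψ : (Fin (n + 1) → ℝ) → ℝ,
      (∀ v, 0 ≤ ψ v) → (∀ v, ψ v = 0 ↔ v = 0) →
      (∀ (a : ℝ) v, ψ (a • v) = |a| * ψ v) →
      (∀ v w, ψ (v + w) ≤ ψ v + ψ w) →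
      ∫⁻ x in Ju, ENNReal.ofReal (ψ (νu x)) ∂μH[(n : ℝ)]
        ≤ Filter.liminf
            (fun ρ => ∫⁻ x in J ρ, ENNReal.ofReal (ψ (νj ρ x)) ∂μH[(n : ℝ)])
            (nhdsWithin 0 (Set.Ioi (0 : ℝ)))) :
    ∀ᵐ x ∂(μH[(n : ℝ)].restrict Ju), νu x (Fin.last n) = 0 := by
  obtain ⟨C₀, hC₀, hbound⟩ := hbound
  have hsurface : ∀ ρ : ℝ, 0 < ρ →
      ∫⁻ x in Ju, ENNReal.ofReal (phiRho n ρ (νu x)) ∂μH[(n : ℝ)] ≤ C₀ := fun ρ hρ =>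
    (hlsc _ (phiRho_nonneg n ρ) (phiRho_eq_zero_iff n hρ.ne') (phiRho_smul n ρ)
      (phiRho_add_le n ρ)).trans <|
      liminf_nhdsGT_le_of_forall_Ioo_le hρ fun σ hσ =>
        (lintegral_mono fun x => ENNReal.ofReal_le_ofReal
          (phiRho_anti hσ.1 hσ.2.le _)).trans (hbound σ hσ.1)
  have hlast : ∫⁻ x in Ju, ENNReal.ofReal |νu x (Fin.last n)| ∂μH[(n : ℝ)] = 0 :=
    ENNReal.eq_zero_of_forall_le_ofReal_mul hC₀ fun ρ hρ =>
      (lintegral_abs_last_le _ hρ νu).trans (mul_le_mul_right (hsurface ρ hρ) _)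
  filter_upwards [(lintegral_eq_zero_iff (ENNReal.measurable_ofReal.comp hmeas.abs)).1 hlast]
    with x hx
  simpa using hx
end

section
/- Let u ∈ KL(Ω₁) with Kirchhoff-Love decomposition u = (ū₁,…,ū_{n-1}, u_n) − x_n(∂₁u_n,…,∂_{n-1}u_n, 0). Fix x' ∈ ω which is an approximate jump point of the map ψ := ∇u_n with ψ⁺(x') = a', ψ⁻(x') = b', a' ≠ b', and suppose (x', x_n) ∈ J_u is a jump point of u with traces a, b and the same (horizontal) normal. Then for every t ∈ (−1/2, 1/2) with a + (x_n − t)a' ≠ b + (x_n − t)b' (here a', b' are viewed in ℝⁿ with zero last component), the point (x', t) is also a jump point of u, with the same normal. In particular the set of t for which (x', t) ∉ J_u is finite (at most one point). -/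
open MeasureTheory Set Filter
open scoped ENNReal

/-- Projection of `ℝ^{n+1}` onto the first `n` coordinates. -/
def projH (n : ℕ) (x : Fin (n + 1) → ℝ) : Fin n → ℝ := fun i => x i.castSucc

/-- One-sided approximate limit `a ∈ ℝ^m` of `f : ℝ^N → ℝ^m` at `x` in the half space
`{y : (y − x)·ν > 0}`: the set where `f` stays `ε`-away from `a` on that side has
vanishing density at `x`. -/
def HalfApLimV (N m : ℕ) (f : (Fin N → ℝ) → Fin m → ℝ) (x ν : Fin N → ℝ)
    (a : Fin m → ℝ) : Prop :=
  ∀ ε > (0 : ℝ),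
    Tendsto (fun r => volume {y | y ∈ Metric.ball x r ∧
        0 < ∑ i, ν i * (y i - x i) ∧ ε < dist (f y) a}
      / volume (Metric.ball x r))
      (nhdsWithin 0 (Set.Ioi (0 : ℝ))) (nhds 0)

/-- The affinely transported trace `a + s (a', 0)` appearing in the vertical
propagation of jumps. -/
def shiftTrace (n : ℕ) (a : Fin (n + 1) → ℝ) (a' : Fin n → ℝ) (s : ℝ) :
    Fin (n + 1) → ℝ :=
  fun i => a i + s * (Fin.snoc a' (0 : ℝ) : Fin (n + 1) → ℝ) i

/-! The Kirchhoff–Love form of `u` gives `u y = u (y + s eₙ) + s (ψ y', 0)`, so translating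
vertically by `s = xₙ - t` moves the half ball at `(x', t)` onto the one at `(x', xₙ)`. Where
`u` is `ε`-far from `a + s (a', 0)`, either `u` is `ε/2`-far from `a` at the translated point or
`ψ` is `ε/(2(|s|+1))`-far from `a'` at `y'` (the `+1` keeps the threshold positive at `s = 0`).
The second set is a cylinder of height `2r` over an `n`-dimensional half ball, so both parts
have vanishing density. The exceptional heights form a singleton at most because
`a + s (a', 0) = b + s (b', 0)` is affine in `s` with slope `a' - b' ≠ 0`. -/

open Topology

lemma dist_snoc_snoc {α : Type*} [PseudoMetricSpace α] {n : ℕ} (v w : Fin n → α) (c : α) :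
    dist (Fin.snoc v c : Fin (n + 1) → α) (Fin.snoc w c) = dist v w := by
  refine le_antisymm ((dist_pi_le_iff dist_nonneg).2 fun i => ?_)
    ((dist_pi_le_iff dist_nonneg).2 fun i => ?_)
  · induction i using Fin.lastCases with
    | last => simp
    | cast j => simpa using dist_le_pi_dist v w j
  · simpa using dist_le_pi_dist (Fin.snoc v c : Fin (n + 1) → α) (Fin.snoc w c) i.castSucc

lemma neg_snoc_zero {n : ℕ} (ν : Fin n → ℝ) :
    (fun i => -((Fin.snoc ν (0 : ℝ) : Fin (n + 1) → ℝ) i)) = Fin.snoc (fun i => -ν i) 0 := by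
  ext i
  induction i using Fin.lastCases <;> simp

lemma snoc_add_snoc_zero {n : ℕ} (x : Fin n → ℝ) (t s : ℝ) :
    (Fin.snoc x t : Fin (n + 1) → ℝ) + Fin.snoc 0 s = Fin.snoc x (t + s) := by
  ext i
  induction i using Fin.lastCases <;> simp

lemma projH_eq_init {n : ℕ} : projH n = Fin.init := rfl

@[simp]
lemma projH_snoc {n : ℕ} (x : Fin n → ℝ) (t : ℝ) : projH n (Fin.snoc x t) = x := by
  ext i; simp [projH]

@[simp]
lemma projH_add_snoc_zero {n : ℕ} (y : Fin (n + 1) → ℝ) (s : ℝ) :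
    projH n (y + Fin.snoc 0 s) = projH n y := by
  ext i; simp [projH]

lemma dist_projH_le {n : ℕ} (y z : Fin (n + 1) → ℝ) : dist (projH n y) (projH n z) ≤ dist y z :=
  (dist_pi_le_iff dist_nonneg).2 fun i => dist_le_pi_dist y z i.castSucc

lemma sum_snoc_zero_mul_sub {n : ℕ} (ν x : Fin n → ℝ) (c : ℝ) (y : Fin (n + 1) → ℝ) :
    ∑ i, (Fin.snoc ν (0 : ℝ) : Fin (n + 1) → ℝ) i * (y i - (Fin.snoc x c : Fin (n + 1) → ℝ) i)
      = ∑ i, ν i * (projH n y i - x i) := by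
  simp [Fin.sum_univ_castSucc, projH]

lemma shiftTrace_eq_add_smul {n : ℕ} (a : Fin (n + 1) → ℝ) (a' : Fin n → ℝ) (s : ℝ) :
    shiftTrace n a a' s = a + s • Fin.snoc a' 0 :=
  rfl

lemma volume_cylinder {n : ℕ} (I : Set ℝ) (C : Set (Fin n → ℝ)) :
    volume {y : Fin (n + 1) → ℝ | y (Fin.last n) ∈ I ∧ projH n y ∈ C} = volume I * volume C := by
  have h := (volume_preserving_piFinSuccAbove (fun _ : Fin (n + 1) => ℝ)
    (Fin.last n)).measure_preimage_equiv (I ×ˢ C)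
  rw [Measure.volume_eq_prod, Measure.prod_prod] at h
  convert h using 2
  ext y
  simp [projH_eq_init]

def halfBallFarSet (N m : ℕ) (f : (Fin N → ℝ) → Fin m → ℝ) (x ν : Fin N → ℝ)
    (a : Fin m → ℝ) (ε r : ℝ) : Set (Fin N → ℝ) :=
  {y | y ∈ Metric.ball x r ∧ 0 < ∑ i, ν i * (y i - x i) ∧ ε < dist (f y) a}

lemma halfApLimV_iff {N m : ℕ} {f : (Fin N → ℝ) → Fin m → ℝ} {x ν : Fin N → ℝ}
    {a : Fin m → ℝ} :
    HalfApLimV N m f x ν a ↔ ∀ ε > (0 : ℝ),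
      Tendsto (fun r => volume (halfBallFarSet N m f x ν a ε r) / volume (Metric.ball x r))
        (𝓝[>] 0) (𝓝 0) :=
  Iff.rfl

section KirchhoffLove

variable {n : ℕ} {u : (Fin (n + 1) → ℝ) → Fin (n + 1) → ℝ}
  {F : (Fin n → ℝ) → Fin (n + 1) → ℝ} {ψ : (Fin n → ℝ) → Fin n → ℝ}

lemma eq_add_smul_of_decomp (hdecomp : ∀ x : Fin (n + 1) → ℝ, ∀ i : Fin (n + 1),
      u x i = F (projH n x) i - x (Fin.last n) * (Fin.snoc (ψ (projH n x)) (0 : ℝ) : Fin (n + 1) → ℝ) i)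
    (y : Fin (n + 1) → ℝ) (s : ℝ) :
    u y = u (y + Fin.snoc 0 s) + s • Fin.snoc (ψ (projH n y)) 0 := by
  ext i
  simp only [Pi.add_apply, Pi.smul_apply, smul_eq_mul, hdecomp, projH_add_snoc_zero,
    Fin.snoc_last]
  ring

lemma dist_shiftTrace_le
    (hvert : ∀ (y : Fin (n + 1) → ℝ) (s : ℝ),
      u y = u (y + Fin.snoc 0 s) + s • Fin.snoc (ψ (projH n y)) 0)
    (a : Fin (n + 1) → ℝ) (a' : Fin n → ℝ) (s : ℝ) (y : Fin (n + 1) → ℝ) :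
    dist (u y) (shiftTrace n a a' s)
      ≤ dist (u (y + Fin.snoc 0 s)) a + |s| * dist (ψ (projH n y)) a' := by
  set e : Fin (n + 1) → ℝ := Fin.snoc 0 s
  set p : Fin (n + 1) → ℝ := Fin.snoc (ψ (projH n y)) 0
  set p₀ : Fin (n + 1) → ℝ := Fin.snoc a' 0
  calc dist (u y) (shiftTrace n a a' s)
      = dist (u (y + e) + s • p) (a + s • p₀) := by rw [← hvert, shiftTrace_eq_add_smul]
    _ ≤ dist (u (y + e)) a + dist (s • p) (s • p₀) := dist_add_add_le _ _ _ _
    _ = dist (u (y + e)) a + |s| * dist (ψ (projH n y)) a' := by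
        rw [dist_smul₀, dist_snoc_snoc, Real.norm_eq_abs]

lemma halfBallFarSet_shiftTrace_subset
    (hvert : ∀ (y : Fin (n + 1) → ℝ) (s : ℝ),
      u y = u (y + Fin.snoc 0 s) + s • Fin.snoc (ψ (projH n y)) 0)
    (x' ν a' : Fin n → ℝ) (a : Fin (n + 1) → ℝ) (xn t ε r : ℝ) :
    halfBallFarSet (n + 1) (n + 1) u (Fin.snoc x' t) (Fin.snoc ν 0)
        (shiftTrace n a a' (xn - t)) ε r ⊆
      (· + Fin.snoc 0 (xn - t)) ⁻¹'
          halfBallFarSet (n + 1) (n + 1) u (Fin.snoc x' xn) (Fin.snoc ν 0) a (ε / 2) r ∪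
        {y | y (Fin.last n) ∈ Metric.ball t r ∧
          projH n y ∈ halfBallFarSet n n ψ x' ν a' (ε / (2 * (|xn - t| + 1))) r} := by
  rintro y ⟨hy_ball, hy_half, hy_far⟩
  rw [sum_snoc_zero_mul_sub] at hy_half
  have hcenter : (Fin.snoc x' xn : Fin (n + 1) → ℝ) = Fin.snoc x' t + Fin.snoc 0 (xn - t) := by
    rw [snoc_add_snoc_zero, add_sub_cancel]
  by_cases hu_far : ε / 2 < dist (u (y + Fin.snoc 0 (xn - t))) a
  · refine Or.inl ⟨?_, ?_, hu_far⟩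
    · rwa [Metric.mem_ball, hcenter, dist_add_right]
    · rwa [sum_snoc_zero_mul_sub, projH_add_snoc_zero]
  · have hψ_far : ε / 2 < (|xn - t| + 1) * dist (ψ (projH n y)) a' := by
      have hsplit := dist_shiftTrace_le hvert a a' (xn - t) y
      nlinarith [dist_nonneg (x := ψ (projH n y)) (y := a')]
    refine Or.inr ⟨by simpa using (dist_le_pi_dist y _ (Fin.last n)).trans_lt hy_ball, ?_⟩
    refine ⟨by simpa using (dist_projH_le y _).trans_lt hy_ball, hy_half, ?_⟩
    rw [div_lt_iff₀ (by positivity)]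
    linarith

end KirchhoffLove

lemma volume_ball_fin {k : ℕ} (c : Fin k → ℝ) {r : ℝ} (hr : 0 < r) :
    volume (Metric.ball c r) = ENNReal.ofReal (2 * r) ^ k := by
  rw [Real.volume_pi_ball c hr, Fintype.card_fin, ENNReal.ofReal_pow (by positivity)]

lemma volume_div_volume_ball_le_of_subset {n : ℕ} {A B : Set (Fin (n + 1) → ℝ)}
    {C : Set (Fin n → ℝ)} (e x y : Fin (n + 1) → ℝ) (z : Fin n → ℝ) {t r : ℝ} (hr : 0 < r)
    (hA : A ⊆ (· + e) ⁻¹' B ∪ {w | w (Fin.last n) ∈ Metric.ball t r ∧ projH n w ∈ C}) :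
    volume A / volume (Metric.ball x r)
      ≤ volume B / volume (Metric.ball y r) + volume C / volume (Metric.ball z r) := by
  set V := ENNReal.ofReal (2 * r)
  have hV : V ≠ 0 := (ENNReal.ofReal_pos.2 (by positivity)).ne'
  have hball : ∀ {k : ℕ} (c : Fin k → ℝ), volume (Metric.ball c r) = V ^ k :=
    fun c => volume_ball_fin c hr
  have hA_le : volume A ≤ volume B + V * volume C :=
    calc volume A
        ≤ volume ((· + e) ⁻¹' B)
          + volume {w : Fin (n + 1) → ℝ | w (Fin.last n) ∈ Metric.ball t r ∧ projH n w ∈ C} :=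
          (measure_mono hA).trans (measure_union_le _ _)
      _ = volume B + V * volume C := by
          rw [measure_preimage_add_right, volume_cylinder, Real.volume_ball]
  calc volume A / volume (Metric.ball x r)
      ≤ (volume B + V * volume C) / V ^ (n + 1) := by
        rw [hball]
        exact ENNReal.div_le_div_right hA_le _
    _ = volume B / volume (Metric.ball y r) + volume C / volume (Metric.ball z r) := by
        rw [hball, hball, ENNReal.add_div, pow_succ',
          ENNReal.mul_div_mul_left _ _ hV ENNReal.ofReal_ne_top]

lemma HalfApLimV.snoc_shiftTrace {n : ℕ} {u : (Fin (n + 1) → ℝ) → Fin (n + 1) → ℝ}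
    {ψ : (Fin n → ℝ) → Fin n → ℝ}
    (hvert : ∀ (y : Fin (n + 1) → ℝ) (s : ℝ),
      u y = u (y + Fin.snoc 0 s) + s • Fin.snoc (ψ (projH n y)) 0)
    {x' ν a' : Fin n → ℝ} {a : Fin (n + 1) → ℝ} {xn : ℝ}
    (hu : HalfApLimV (n + 1) (n + 1) u (Fin.snoc x' xn) (Fin.snoc ν 0) a)
    (hψ : HalfApLimV n n ψ x' ν a') (t : ℝ) :
    HalfApLimV (n + 1) (n + 1) u (Fin.snoc x' t) (Fin.snoc ν 0) (shiftTrace n a a' (xn - t)) := by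
  rw [halfApLimV_iff] at hu hψ ⊢
  intro ε hε
  have hlim := (hu (ε / 2) (by positivity)).add (hψ (ε / (2 * (|xn - t| + 1))) (by positivity))
  rw [zero_add] at hlim
  refine tendsto_of_tendsto_of_tendsto_of_le_of_le' tendsto_const_nhds hlim
    (Eventually.of_forall fun _ => zero_le) ?_
  filter_upwards [self_mem_nhdsWithin] with r (hr : 0 < r)
  exact volume_div_volume_ball_le_of_subset _ _ _ _ hr
    (halfBallFarSet_shiftTrace_subset hvert x' ν a' a xn t ε r)

lemma subsingleton_setOf_shiftTrace_eq {n : ℕ} (a b : Fin (n + 1) → ℝ) {a' b' : Fin n → ℝ}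
    (hab' : a' ≠ b') : {s | shiftTrace n a a' s = shiftTrace n b b' s}.Subsingleton := by
  intro s₁ hs₁ s₂ hs₂
  obtain ⟨i, hi⟩ := Function.ne_iff.mp hab'
  have h₁ := congrFun hs₁ i.castSucc
  have h₂ := congrFun hs₂ i.castSucc
  simp only [shiftTrace, Fin.snoc_castSucc] at h₁ h₂
  have hprod : (s₁ - s₂) * (a' i - b' i) = 0 := by linear_combination h₁ - h₂
  exact sub_eq_zero.1 ((mul_eq_zero.1 hprod).resolve_right (sub_ne_zero.2 hi))

theorem stmt16_general (n : ℕ)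
    (u : (Fin (n + 1) → ℝ) → Fin (n + 1) → ℝ)
    (F : (Fin n → ℝ) → Fin (n + 1) → ℝ) (ψ : (Fin n → ℝ) → Fin n → ℝ)
    (hdecomp : ∀ x : Fin (n + 1) → ℝ, ∀ i : Fin (n + 1),
      u x i = F (projH n x) i - x (Fin.last n) * (Fin.snoc (ψ (projH n x)) (0 : ℝ) : Fin (n + 1) → ℝ) i)
    (x' : Fin n → ℝ) (a' b' ν' : Fin n → ℝ)
    (hab' : a' ≠ b')
    (hψp : HalfApLimV n n ψ x' ν' a') (hψm : HalfApLimV n n ψ x' (fun i => -ν' i) b')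
    (xn : ℝ) (a b : Fin (n + 1) → ℝ)
    (hup : HalfApLimV (n + 1) (n + 1) u (Fin.snoc x' xn) (Fin.snoc ν' (0 : ℝ)) a)
    (hum : HalfApLimV (n + 1) (n + 1) u (Fin.snoc x' xn)
      (fun i => -((Fin.snoc ν' (0 : ℝ) : Fin (n + 1) → ℝ) i)) b) :
    (∀ t : ℝ,
      shiftTrace n a a' (xn - t) ≠ shiftTrace n b b' (xn - t) →
      HalfApLimV (n + 1) (n + 1) u (Fin.snoc x' t) (Fin.snoc ν' (0 : ℝ))
          (shiftTrace n a a' (xn - t)) ∧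
        HalfApLimV (n + 1) (n + 1) u (Fin.snoc x' t)
          (fun i => -((Fin.snoc ν' (0 : ℝ) : Fin (n + 1) → ℝ) i)) (shiftTrace n b b' (xn - t))) ∧
    {t : ℝ | shiftTrace n a a' (xn - t) = shiftTrace n b b' (xn - t)}.Subsingleton := by
  have hvert := eq_add_smul_of_decomp hdecomp
  rw [neg_snoc_zero] at hum ⊢
  refine ⟨fun t _ => ⟨hup.snoc_shiftTrace hvert hψp t, hum.snoc_shiftTrace hvert hψm t⟩, ?_⟩
  exact (subsingleton_setOf_shiftTrace_eq a b hab').preimage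
    (sub_right_injective : Function.Injective (xn - ·))

/-- Vertical propagation of jump points (used in Proposition 6).  Let
`u(x) = F(x') − x_n (ψ(x'), 0)` be a Kirchhoff–Love displacement on `ℝ^{n+1}`.  Fix
`x' ∈ ℝⁿ` which is an approximate jump point of `ψ = ∇u_n` with one-sided limits
`a' ≠ b'` and horizontal unit normal `ν'`, and suppose `(x', x_n)` is an approximate
jump point of `u` with traces `a, b`, `a ≠ b`, and the same horizontal normal
`(ν', 0)`.  Then for every `t` with
`a + (x_n − t)(a',0) ≠ b + (x_n − t)(b',0)`, the point `(x', t)` is an approximate jump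
point of `u` with those one-sided limits and the same normal; and the exceptional set
of `t` for which this fails contains at most one point. -/
theorem stmt16 (n : ℕ)
    (u : (Fin (n + 1) → ℝ) → Fin (n + 1) → ℝ)
    (F : (Fin n → ℝ) → Fin (n + 1) → ℝ) (ψ : (Fin n → ℝ) → Fin n → ℝ)
    (hdecomp : ∀ x : Fin (n + 1) → ℝ, ∀ i : Fin (n + 1),
      u x i = F (projH n x) i - x (Fin.last n) * (Fin.snoc (ψ (projH n x)) (0 : ℝ) : Fin (n + 1) → ℝ) i)
    (x' : Fin n → ℝ) (a' b' ν' : Fin n → ℝ)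
    (hν' : ∑ i, (ν' i) ^ 2 = 1) (hab' : a' ≠ b')
    (hψp : HalfApLimV n n ψ x' ν' a') (hψm : HalfApLimV n n ψ x' (fun i => -ν' i) b')
    (xn : ℝ) (a b : Fin (n + 1) → ℝ) (hab : a ≠ b)
    (hup : HalfApLimV (n + 1) (n + 1) u (Fin.snoc x' xn) (Fin.snoc ν' (0 : ℝ)) a)
    (hum : HalfApLimV (n + 1) (n + 1) u (Fin.snoc x' xn)
      (fun i => -((Fin.snoc ν' (0 : ℝ) : Fin (n + 1) → ℝ) i)) b) :
    (∀ t : ℝ,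
      shiftTrace n a a' (xn - t) ≠ shiftTrace n b b' (xn - t) →
      HalfApLimV (n + 1) (n + 1) u (Fin.snoc x' t) (Fin.snoc ν' (0 : ℝ))
          (shiftTrace n a a' (xn - t)) ∧
        HalfApLimV (n + 1) (n + 1) u (Fin.snoc x' t)
          (fun i => -((Fin.snoc ν' (0 : ℝ) : Fin (n + 1) → ℝ) i)) (shiftTrace n b b' (xn - t))) ∧
    {t : ℝ | shiftTrace n a a' (xn - t) = shiftTrace n b b' (xn - t)}.Subsingleton :=
  stmt16_general n u F ψ hdecomp x' a' b' ν' hab' hψp hψm xn a b hup hum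
end
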